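/- For every complex number λ not lying in [0,∞), the following Lebesgue integrals converge and have the stated values: ∫_{ℝ³} 1/(‖x‖² − λ)² dx = iπ²/√λ, ∫_{ℝ²} 1/(‖x‖² − λ)² dx = −π/λ, and ∫_{ℝ} 1/(x² − λ)² dx = −iπ/(2(√λ)³). -/

import Mathlib

/-!
Write `λ = b²` with `b = √λ` in the upper half plane. Polar coordinates (on `ℝ`: the radius `|x|`)
turn the three integrals into `∫₀^∞ rᵏ / (r² - b²)² dr` for `k = 2, 1, 0`. For `k = 1` there is
the antiderivative `-1 / (2 (r² - b²))`. The other two cases come from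
`J = ∫₀^∞ dr / (r² - b²) = π i / (2 b)`, computed with the antiderivative
`(log (r - b) - log (r + b)) / (2 b)`, whose value at `r = 0` is set by the branch cut:
`log (-b) - log b = -π i`. Differentiating `r / (r² - b²)` gives
`∫₀^∞ r² / (r² - b²)² dr = J / 2`, and then `∫₀^∞ dr / (r² - b²)² = -J / (2 b²)`.
Since `-b²` lies off `(-∞, 0]`, `‖r² - b²‖` is bounded below by a multiple of `1 + r²`, which
gives all the integrability and decay statements.
-/

open MeasureTheory

/-- The branch of the complex square root with positive imaginary part
(for `z ∉ [0,∞)`): `√z = i · (−z)^{1/2}` where `(−z)^{1/2}` is the principal root. -/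
noncomputable def sqrtUpper (z : ℂ) : ℂ := Complex.I * (-z) ^ ((1 : ℂ) / 2)

open Complex Filter Metric Set Topology
open scoped Real

open scoped ComplexOrder in
lemma neg_mem_slitPlane_of_ne_ofReal_nonneg {z : ℂ} (hz : ∀ t : ℝ, 0 ≤ t → z ≠ t) :
    -z ∈ slitPlane := by
  rw [mem_slitPlane_iff_not_le_zero, neg_nonpos, RCLike.nonneg_iff_exists_ofReal]
  rintro ⟨t, ht, rfl⟩
  exact hz t ht rfl

lemma sqrtUpper_sq (z : ℂ) : sqrtUpper z ^ 2 = z := by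
  rw [sqrtUpper, mul_pow, I_sq, one_div, cpow_ofNat_inv_pow]
  ring

lemma im_sqrtUpper_pos {z : ℂ} (hz : -z ∈ slitPlane) : 0 < (sqrtUpper z).im := by
  rw [sqrtUpper, I_mul_im, one_div, cpow_inv_two_re, Real.sqrt_pos]
  rcases mem_slitPlane_iff.1 hz with hre | him
  · linarith [norm_nonneg (-z)]
  · linarith [neg_abs_le (-z).re, abs_re_lt_norm.2 him]

lemma exists_pos_le_norm_ofReal_add {c : ℂ} (hc : c ∈ slitPlane) :
    ∃ δ > 0, ∀ t : ℝ, 0 ≤ t → δ ≤ ‖(t : ℂ) + c‖ := by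
  rcases mem_slitPlane_iff.1 hc with hre | him
  · refine ⟨c.re, hre, fun t ht => ?_⟩
    calc c.re ≤ ((t : ℂ) + c).re := by simp [ht]
      _ ≤ ‖(t : ℂ) + c‖ := re_le_norm _
  · exact ⟨|c.im|, abs_pos.2 him, fun t _ => by simpa using abs_im_le_norm ((t : ℂ) + c)⟩

section OfRealSqSubSq

variable {b : ℂ}

lemma neg_sq_mem_slitPlane (hb : 0 < b.im) : -b ^ 2 ∈ slitPlane := by
  rw [mem_slitPlane_iff]
  rcases eq_or_ne b.re 0 with h | h
  · left
    simp [sq, h, hb]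
  · right
    simp only [neg_im, sq, mul_im]
    intro h'
    exact mul_ne_zero h hb.ne' (by linarith)

lemma exists_mul_one_add_sq_le_norm_ofReal_sq_sub_sq (hb : 0 < b.im) :
    ∃ κ > 0, ∀ r : ℝ, κ * (1 + r ^ 2) ≤ ‖(r : ℂ) ^ 2 - b ^ 2‖ := by
  obtain ⟨δ, hδ, hle⟩ := exists_pos_le_norm_ofReal_add (neg_sq_mem_slitPlane hb)
  -- `δ` controls small `r`, the growth `r² - ‖b²‖` controls large `r`
  refine ⟨δ / (1 + ‖b ^ 2‖ + δ), by positivity, fun r => ?_⟩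
  have hδle : δ ≤ ‖(r : ℂ) ^ 2 - b ^ 2‖ := by
    simpa [sub_eq_add_neg] using hle (r ^ 2) (sq_nonneg r)
  have hgrowth : r ^ 2 - ‖b ^ 2‖ ≤ ‖(r : ℂ) ^ 2 - b ^ 2‖ := by
    have hr : ‖(r : ℂ) ^ 2‖ = r ^ 2 := by rw [norm_pow, norm_real, Real.norm_eq_abs, sq_abs]
    linarith [norm_sub_norm_le ((r : ℂ) ^ 2) (b ^ 2)]
  rw [div_mul_eq_mul_div, div_le_iff₀ (by positivity)]
  nlinarith [norm_nonneg (b ^ 2)]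

lemma ofReal_sq_sub_sq_ne_zero (hb : 0 < b.im) (r : ℝ) : (r : ℂ) ^ 2 - b ^ 2 ≠ 0 := by
  obtain ⟨κ, hκ, hle⟩ := exists_mul_one_add_sq_le_norm_ofReal_sq_sub_sq hb
  exact norm_pos_iff.1 ((by positivity : 0 < κ * (1 + r ^ 2)).trans_le (hle r))

lemma exists_norm_inv_ofReal_sq_sub_sq_le (hb : 0 < b.im) :
    ∃ C > 0, ∀ r : ℝ, ‖((r : ℂ) ^ 2 - b ^ 2)⁻¹‖ ≤ C * (1 + r ^ 2)⁻¹ := by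
  obtain ⟨κ, hκ, hle⟩ := exists_mul_one_add_sq_le_norm_ofReal_sq_sub_sq hb
  refine ⟨κ⁻¹, inv_pos.2 hκ, fun r => ?_⟩
  rw [norm_inv, ← mul_inv]
  exact inv_anti₀ (by positivity) (hle r)

lemma continuous_inv_ofReal_sq_sub_sq (hb : 0 < b.im) :
    Continuous fun r : ℝ => ((r : ℂ) ^ 2 - b ^ 2)⁻¹ :=
  ((continuous_ofReal.pow 2).sub continuous_const).inv₀ (ofReal_sq_sub_sq_ne_zero hb)

lemma integrable_inv_ofReal_sq_sub_sq (hb : 0 < b.im) :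
    Integrable fun r : ℝ => ((r : ℂ) ^ 2 - b ^ 2)⁻¹ := by
  obtain ⟨C, -, hC⟩ := exists_norm_inv_ofReal_sq_sub_sq_le hb
  exact (integrable_inv_one_add_sq.const_mul C).mono'
    (continuous_inv_ofReal_sq_sub_sq hb).aestronglyMeasurable (ae_of_all _ hC)

lemma integrable_pow_mul_inv_ofReal_sq_sub_sq_sq (hb : 0 < b.im) {k : ℕ} (hk : k ≤ 2) :
    Integrable fun r : ℝ => (r : ℂ) ^ k * (((r : ℂ) ^ 2 - b ^ 2) ^ 2)⁻¹ := by
  obtain ⟨C, -, hC⟩ := exists_norm_inv_ofReal_sq_sub_sq_le hb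
  have hcont : Continuous fun r : ℝ => (r : ℂ) ^ k * (((r : ℂ) ^ 2 - b ^ 2) ^ 2)⁻¹ := by
    simp_rw [← inv_pow]
    exact (continuous_ofReal.pow k).mul ((continuous_inv_ofReal_sq_sub_sq hb).pow 2)
  refine (integrable_inv_one_add_sq.const_mul (C ^ 2)).mono' hcont.aestronglyMeasurable
    (ae_of_all _ fun r => ?_)
  have hpow : |r| ^ k ≤ 1 + r ^ 2 := by
    interval_cases k <;> nlinarith [sq_abs r, abs_nonneg r]
  calc ‖(r : ℂ) ^ k * (((r : ℂ) ^ 2 - b ^ 2) ^ 2)⁻¹‖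
      = |r| ^ k * ‖((r : ℂ) ^ 2 - b ^ 2)⁻¹‖ ^ 2 := by simp [inv_pow]
    _ ≤ (1 + r ^ 2) * (C * (1 + r ^ 2)⁻¹) ^ 2 := by gcongr; exact hC r
    _ = C ^ 2 * (1 + r ^ 2)⁻¹ := by field_simp

lemma tendsto_pow_mul_inv_ofReal_sq_sub_sq_atTop (hb : 0 < b.im) {k : ℕ} (hk : k ≤ 1) :
    Tendsto (fun r : ℝ => (r : ℂ) ^ k * ((r : ℂ) ^ 2 - b ^ 2)⁻¹) atTop (𝓝 0) := by
  obtain ⟨C, hC0, hC⟩ := exists_norm_inv_ofReal_sq_sub_sq_le hb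
  refine squeeze_zero_norm' ?_
    (tendsto_const_nhds.div_atTop tendsto_id : Tendsto (fun r : ℝ => C / r) atTop (𝓝 0))
  filter_upwards [eventually_gt_atTop 0] with r hr
  have hpow : r ^ k * r ≤ 1 + r ^ 2 := by interval_cases k <;> nlinarith
  calc ‖(r : ℂ) ^ k * ((r : ℂ) ^ 2 - b ^ 2)⁻¹‖
      = r ^ k * ‖((r : ℂ) ^ 2 - b ^ 2)⁻¹‖ := by simp [abs_of_pos hr]
    _ ≤ r ^ k * (C * (1 + r ^ 2)⁻¹) := by gcongr; exact hC r
    _ ≤ C / r := by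
      rw [le_div_iff₀ hr]
      calc r ^ k * (C * (1 + r ^ 2)⁻¹) * r = C * (r ^ k * r / (1 + r ^ 2)) := by ring
        _ ≤ C * 1 := by gcongr; exact div_le_one_of_le₀ hpow (by positivity)
        _ = C := mul_one C

end OfRealSqSubSq

section LogAntiderivative

variable {b : ℂ}

lemma hasDerivAt_log_sub_log_div (hb : b.im ≠ 0) (r : ℝ) :
    HasDerivAt (fun x : ℝ => (log (x - b) - log (x + b)) / (2 * b))
      ((r : ℂ) ^ 2 - b ^ 2)⁻¹ r := by
  have hsub : (r : ℂ) - b ∈ slitPlane := by simp [mem_slitPlane_iff, hb]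
  have hadd : (r : ℂ) + b ∈ slitPlane := by simp [mem_slitPlane_iff, hb]
  have h := ((((hasDerivAt_id (r : ℂ)).sub_const b).clog hsub).sub
    (((hasDerivAt_id (r : ℂ)).add_const b).clog hadd)).div_const (2 * b)
  refine h.comp_ofReal.congr_deriv ?_
  have hb0 : b ≠ 0 := ne_of_apply_ne im hb
  rw [id, show (r : ℂ) ^ 2 - b ^ 2 = (r - b) * (r + b) by ring]
  field_simp [slitPlane_ne_zero hsub, slitPlane_ne_zero hadd]
  ring

lemma tendsto_log_sub_log_atTop (hb : b.im ≠ 0) :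
    Tendsto (fun r : ℝ => log (r - b) - log (r + b)) atTop (𝓝 0) := by
  have hcont : ContinuousAt (fun w : ℂ => log (1 - b * w) - log (1 + b * w)) 0 :=
    ((continuousAt_const.sub (continuousAt_const.mul continuousAt_id)).clog (by simp)).sub
      ((continuousAt_const.add (continuousAt_const.mul continuousAt_id)).clog (by simp))
  have hinv : Tendsto (fun r : ℝ => ((r : ℂ))⁻¹) atTop (𝓝 0) := by
    simpa [Function.comp_def] using (continuous_ofReal.tendsto 0).comp tendsto_inv_atTop_zero
  have hlim : Tendsto (fun r : ℝ => log (1 - b * (r : ℂ)⁻¹) - log (1 + b * (r : ℂ)⁻¹))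
      atTop (𝓝 0) := by
    simpa [Function.comp_def] using hcont.tendsto.comp hinv
  refine hlim.congr' ?_
  filter_upwards [eventually_gt_atTop 0] with r hr
  have hlog : ∀ c : ℂ, c.im ≠ 0 → log (r + c) = Real.log r + log (1 + c * (r : ℂ)⁻¹) := by
    intro c hc
    have hr' : (r : ℂ) ≠ 0 := ofReal_ne_zero.2 hr.ne'
    have hfac : (r : ℂ) + c = r * (1 + c * (r : ℂ)⁻¹) := by field_simp
    rw [hfac, log_ofReal_mul hr]
    refine fun h => hc ?_
    simpa using congrArg im (hfac.trans (by rw [h, mul_zero]) : (r : ℂ) + c = 0)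
  rw [sub_eq_add_neg (r : ℂ) b, hlog b hb, hlog (-b) (by simpa using hb), neg_mul,
    ← sub_eq_add_neg]
  ring

lemma log_neg_sub_log_of_im_pos (hb : 0 < b.im) : log (-b) - log b = -(π * I) := by
  apply Complex.ext <;> simp [log_re, log_im, arg_neg_eq_arg_sub_pi_of_im_pos hb]

end LogAntiderivative

section IntegralsIoi

variable {b : ℂ}

lemma hasDerivAt_inv_ofReal_sq_sub_sq (hb : 0 < b.im) (r : ℝ) :
    HasDerivAt (fun x : ℝ => ((x : ℂ) ^ 2 - b ^ 2)⁻¹)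
      (-(2 * r) / ((r : ℂ) ^ 2 - b ^ 2) ^ 2) r := by
  have h := ((hasDerivAt_pow 2 (r : ℂ)).sub_const (b ^ 2)).inv (ofReal_sq_sub_sq_ne_zero hb r)
  simpa using h.comp_ofReal

lemma integral_Ioi_inv_ofReal_sq_sub_sq (hb : 0 < b.im) :
    ∫ r in Ioi (0 : ℝ), ((r : ℂ) ^ 2 - b ^ 2)⁻¹ = π * I / (2 * b) := by
  have hlim := (tendsto_log_sub_log_atTop hb.ne').div_const (2 * b)
  rw [zero_div] at hlim
  rw [integral_Ioi_of_hasDerivAt_of_tendsto' (fun r _ => hasDerivAt_log_sub_log_div hb.ne' r)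
    (integrable_inv_ofReal_sq_sub_sq hb).integrableOn hlim]
  simp only [ofReal_zero, zero_sub, zero_add, log_neg_sub_log_of_im_pos hb]
  ring

lemma integral_Ioi_ofReal_mul_inv_sq (hb : 0 < b.im) :
    ∫ r in Ioi (0 : ℝ), (r : ℂ) * (((r : ℂ) ^ 2 - b ^ 2) ^ 2)⁻¹ = -(2 * b ^ 2)⁻¹ := by
  have hb0 : b ≠ 0 := ne_of_apply_ne im hb.ne'
  have hderiv (r : ℝ) : HasDerivAt (fun x : ℝ => -((x : ℂ) ^ 2 - b ^ 2)⁻¹ / 2)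
      ((r : ℂ) * (((r : ℂ) ^ 2 - b ^ 2) ^ 2)⁻¹) r := by
    refine ((hasDerivAt_inv_ofReal_sq_sub_sq hb r).neg.div_const 2).congr_deriv ?_
    field_simp
  have hlim := ((tendsto_pow_mul_inv_ofReal_sq_sub_sq_atTop hb zero_le_one).neg.div_const 2)
  simp only [pow_zero, one_mul, neg_zero, zero_div] at hlim
  rw [integral_Ioi_of_hasDerivAt_of_tendsto' (fun r _ => hderiv r)
    (by simpa using (integrable_pow_mul_inv_ofReal_sq_sub_sq_sq hb one_le_two).integrableOn) hlim]
  rw [ofReal_zero]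
  field_simp
  ring

lemma integral_Ioi_sq_mul_inv_sq (hb : 0 < b.im) :
    ∫ r in Ioi (0 : ℝ), (r : ℂ) ^ 2 * (((r : ℂ) ^ 2 - b ^ 2) ^ 2)⁻¹ = π * I / (4 * b) := by
  have hderiv (r : ℝ) : HasDerivAt (fun x : ℝ => (x : ℂ) * ((x : ℂ) ^ 2 - b ^ 2)⁻¹)
      (((r : ℂ) ^ 2 - b ^ 2)⁻¹ - 2 * ((r : ℂ) ^ 2 * (((r : ℂ) ^ 2 - b ^ 2) ^ 2)⁻¹)) r := by
    refine ((hasDerivAt_id r).ofReal_comp.mul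
      (hasDerivAt_inv_ofReal_sq_sub_sq hb r)).congr_deriv ?_
    have := ofReal_sq_sub_sq_ne_zero hb r
    simp only [id, ofReal_one]
    field_simp
    ring
  have hlim := tendsto_pow_mul_inv_ofReal_sq_sub_sq_atTop hb le_rfl
  simp only [pow_one] at hlim
  have hint := integrable_pow_mul_inv_ofReal_sq_sub_sq_sq hb le_rfl
  have hftc := integral_Ioi_of_hasDerivAt_of_tendsto' (a := 0) (fun r _ => hderiv r)
    ((integrable_inv_ofReal_sq_sub_sq hb).sub (hint.const_mul 2)).integrableOn hlim
  rw [integral_sub (integrable_inv_ofReal_sq_sub_sq hb).integrableOn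
    (hint.const_mul 2).integrableOn, integral_const_mul, integral_Ioi_inv_ofReal_sq_sub_sq hb]
    at hftc
  simp only [ofReal_zero, zero_mul, sub_zero] at hftc
  linear_combination -hftc / 2

lemma integral_Ioi_inv_sq (hb : 0 < b.im) :
    ∫ r in Ioi (0 : ℝ), (((r : ℂ) ^ 2 - b ^ 2) ^ 2)⁻¹ = -(π * I) / (4 * b ^ 3) := by
  have hb0 : b ≠ 0 := ne_of_apply_ne im hb.ne'
  have hsplit : ∀ r ∈ Ioi (0 : ℝ), (((r : ℂ) ^ 2 - b ^ 2) ^ 2)⁻¹ =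
      (b ^ 2)⁻¹ * ((r : ℂ) ^ 2 * (((r : ℂ) ^ 2 - b ^ 2) ^ 2)⁻¹ - ((r : ℂ) ^ 2 - b ^ 2)⁻¹) := by
    intro r _
    have := ofReal_sq_sub_sq_ne_zero hb r
    field_simp
    ring
  rw [setIntegral_congr_fun measurableSet_Ioi hsplit, integral_const_mul,
    integral_sub (integrable_pow_mul_inv_ofReal_sq_sub_sq_sq hb le_rfl).integrableOn
      (integrable_inv_ofReal_sq_sub_sq hb).integrableOn,
    integral_Ioi_sq_mul_inv_sq hb, integral_Ioi_inv_ofReal_sq_sub_sq hb]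
  field_simp
  ring

end IntegralsIoi

section Radial

variable {E : Type*} [NormedAddCommGroup E] [NormedSpace ℝ E] [Nontrivial E]
  [FiniteDimensional ℝ E] [MeasurableSpace E] [BorelSpace E] (μ : Measure E)
  [μ.IsAddHaarMeasure] {b : ℂ}

lemma integrable_inv_sq_norm_sq_sub_sq (hb : 0 < b.im) (hdim : Module.finrank ℝ E ≤ 3) :
    Integrable (fun x : E => (((‖x‖ : ℂ) ^ 2 - b ^ 2) ^ 2)⁻¹) μ := by
  refine (integrable_fun_norm_addHaar μ (f := fun t : ℝ => (((t : ℂ) ^ 2 - b ^ 2) ^ 2)⁻¹)).2 ?_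
  refine (integrable_pow_mul_inv_ofReal_sq_sub_sq_sq hb (k := Module.finrank ℝ E - 1)
    (by omega)).integrableOn.congr_fun (fun y _ => ?_) measurableSet_Ioi
  simp [real_smul]

lemma integral_inv_sq_norm_sq_sub_sq :
    ∫ x, (((‖x‖ : ℂ) ^ 2 - b ^ 2) ^ 2)⁻¹ ∂μ = (Module.finrank ℝ E * μ.real (ball 0 1) : ℝ) *
      ∫ y in Ioi (0 : ℝ), (y : ℂ) ^ (Module.finrank ℝ E - 1) * (((y : ℂ) ^ 2 - b ^ 2) ^ 2)⁻¹ := by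
  rw [integral_fun_norm_addHaar μ (fun t : ℝ => (((t : ℂ) ^ 2 - b ^ 2) ^ 2)⁻¹)]
  simp [real_smul, nsmul_eq_mul, mul_assoc]

end Radial

section Dimensions

variable {b : ℂ}

lemma integral_inv_sq_norm_sq_sub_sq_fin_three (hb : 0 < b.im) :
    ∫ x : EuclideanSpace ℝ (Fin 3), (((‖x‖ : ℂ) ^ 2 - b ^ 2) ^ 2)⁻¹ = I * π ^ 2 / b := by
  have hb0 : b ≠ 0 := ne_of_apply_ne im hb.ne'
  rw [integral_inv_sq_norm_sq_sub_sq, finrank_euclideanSpace_fin, measureReal_def,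
    EuclideanSpace.volume_ball_fin_three, ENNReal.ofReal_one, one_pow, one_mul,
    ENNReal.toReal_ofReal (by positivity), integral_Ioi_sq_mul_inv_sq hb]
  push_cast
  field_simp

lemma integral_inv_sq_norm_sq_sub_sq_fin_two (hb : 0 < b.im) :
    ∫ x : EuclideanSpace ℝ (Fin 2), (((‖x‖ : ℂ) ^ 2 - b ^ 2) ^ 2)⁻¹ = -π / b ^ 2 := by
  have hb0 : b ≠ 0 := ne_of_apply_ne im hb.ne'
  rw [integral_inv_sq_norm_sq_sub_sq, finrank_euclideanSpace_fin, measureReal_def,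
    EuclideanSpace.volume_ball_fin_two, ENNReal.ofReal_one, one_pow, one_mul,
    ENNReal.toReal_ofReal Real.pi_nonneg]
  simp only [Nat.add_one_sub_one, pow_one]
  rw [integral_Ioi_ofReal_mul_inv_sq hb]
  push_cast
  field_simp

lemma integral_inv_sq_ofReal_sq_sub_sq (hb : 0 < b.im) :
    ∫ x : ℝ, (((x : ℂ) ^ 2 - b ^ 2) ^ 2)⁻¹ = -(I * π) / (2 * b ^ 3) := by
  have hb0 : b ≠ 0 := ne_of_apply_ne im hb.ne'
  have hnorm : (fun x : ℝ => (((x : ℂ) ^ 2 - b ^ 2) ^ 2)⁻¹) =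
      fun x : ℝ => (((‖x‖ : ℂ) ^ 2 - b ^ 2) ^ 2)⁻¹ := by
    ext x
    rw [Real.norm_eq_abs, ← ofReal_pow |x|, sq_abs, ofReal_pow]
  rw [hnorm, integral_inv_sq_norm_sq_sub_sq, Module.finrank_self,
    Real.volume_real_ball zero_le_one]
  simp only [Nat.sub_self, pow_zero, one_mul]
  rw [integral_Ioi_inv_sq hb]
  push_cast
  field_simp
  ring

end Dimensions

/-- For `λ ∉ [0,∞)`: `∫_{ℝ³} 1/(‖x‖² − λ)² dx = iπ²/√λ`,
`∫_{ℝ²} 1/(‖x‖² − λ)² dx = −π/λ`, and `∫_ℝ 1/(x² − λ)² dx = −iπ/(2(√λ)³)`;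
all three Lebesgue integrals converge. -/
theorem stmt6 (lam : ℂ) (hlam : ∀ t : ℝ, 0 ≤ t → lam ≠ (t : ℂ)) :
    (Integrable (fun x : EuclideanSpace ℝ (Fin 3) => (((‖x‖ : ℂ) ^ 2 - lam) ^ 2)⁻¹) ∧
      ∫ x : EuclideanSpace ℝ (Fin 3), (((‖x‖ : ℂ) ^ 2 - lam) ^ 2)⁻¹
        = Complex.I * (Real.pi : ℂ) ^ 2 / sqrtUpper lam) ∧
    (Integrable (fun x : EuclideanSpace ℝ (Fin 2) => (((‖x‖ : ℂ) ^ 2 - lam) ^ 2)⁻¹) ∧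
      ∫ x : EuclideanSpace ℝ (Fin 2), (((‖x‖ : ℂ) ^ 2 - lam) ^ 2)⁻¹
        = -(Real.pi : ℂ) / lam) ∧
    (Integrable (fun x : ℝ => (((x : ℂ) ^ 2 - lam) ^ 2)⁻¹) ∧
      ∫ x : ℝ, (((x : ℂ) ^ 2 - lam) ^ 2)⁻¹
        = -(Complex.I * (Real.pi : ℂ)) / (2 * (sqrtUpper lam) ^ 3)) := by
  have hb := im_sqrtUpper_pos (neg_mem_slitPlane_of_ne_ofReal_nonneg hlam)
  have hsq := sqrtUpper_sq lam
  generalize sqrtUpper lam = b at hb hsq ⊢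
  subst hsq
  exact ⟨⟨integrable_inv_sq_norm_sq_sub_sq _ hb (by simp),
      integral_inv_sq_norm_sq_sub_sq_fin_three hb⟩,
    ⟨integrable_inv_sq_norm_sq_sub_sq _ hb (by simp), integral_inv_sq_norm_sq_sub_sq_fin_two hb⟩,
    ⟨by simpa using integrable_pow_mul_inv_ofReal_sq_sub_sq_sq hb zero_le_two,
      integral_inv_sq_ofReal_sq_sub_sq hb⟩⟩
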